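/- arXiv:0704.3281 — 4 statements merged into one kernel-verified Lean document; each statement's English description precedes it below -/
import Mathlib

section
/- Under the hypotheses of the flat-top bias representation, if additionally ∫ |t|^r |φ(t)| dt < ∞ for some r > 0, then sup_x |bias at bandwidth h| = o(h^r) as h → 0⁺; in particular, choosing h = a n^{-1/(2r+1)} yields sup_x |bias| = o(n^{-r/(2r+1)}). -/
open MeasureTheory Real Filter Topology

/-! Since `κ = 1` on `[-1, 1]`, the factor `κ (t h) - 1` vanishes unless `|t| h > 1`, and there
it is at most `2 ≤ 2 (|t| h) ^ r`. Hence `|bias h x| ≤ (h ^ r / π) ∫_{|t| h > 1} |t| ^ r |φ t| dt`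
uniformly in `x`, and the tail integral tends to `0` by dominated convergence. -/

theorem tendsto_setIntegral_one_lt_abs_mul_nhdsGT {E : Type*} [NormedAddCommGroup E]
    [NormedSpace ℝ E] {g : ℝ → E} (hg : Integrable g) :
    Tendsto (fun h : ℝ => ∫ t in {s : ℝ | 1 < |s| * h}, g t) (𝓝[>] 0) (𝓝 0) := by
  have hmeas : ∀ h : ℝ, MeasurableSet {s : ℝ | 1 < |s| * h} := fun h =>
    measurableSet_lt measurable_const (measurable_abs.mul_const h)
  simp_rw [← integral_indicator (hmeas _)]
  rw [← integral_zero ℝ E]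
  refine tendsto_integral_filter_of_dominated_convergence (fun t => ‖g t‖)
    (Eventually.of_forall fun h => hg.aestronglyMeasurable.indicator (hmeas h))
    (Eventually.of_forall fun h => ae_of_all _ fun t => norm_indicator_le_norm_self g t)
    hg.norm (ae_of_all _ fun t => tendsto_const_nhds.congr' ?_)
  have hsmall : Set.Ioo (0 : ℝ) (1 / (|t| + 1)) ∈ 𝓝[>] (0 : ℝ) :=
    Ioo_mem_nhdsGT (by positivity)
  filter_upwards [hsmall] with h ⟨hh₀, hh₁⟩
  have ht : ¬1 < |t| * h := by
    rw [lt_div_iff₀ (by positivity)] at hh₁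
    nlinarith [abs_nonneg t]
  exact (Set.indicator_of_notMem (s := {s : ℝ | 1 < |s| * h}) ht _).symm

section FlatTop

variable {κ : ℝ → ℝ} {r h : ℝ}

theorem norm_ofReal_flatTop_sub_one_le (hκ_flat : ∀ t : ℝ, |t| ≤ 1 → κ t = 1)
    (hκ_bdd : ∀ t : ℝ, |κ t| ≤ 1) (hr : 0 ≤ r) (hh : 0 < h) (t : ℝ) :
    ‖(κ (t * h) : ℂ) - 1‖ ≤ {s : ℝ | 1 < |s| * h}.indicator (fun s => 2 * h ^ r * |s| ^ r) t := by
  by_cases ht : 1 < |t| * h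
  · rw [Set.indicator_of_mem (s := {s : ℝ | 1 < |s| * h}) ht]
    have hκ_sub : ‖(κ (t * h) : ℂ) - 1‖ ≤ 2 := by
      refine (norm_sub_le _ _).trans ?_
      rw [Complex.norm_real, norm_one, Real.norm_eq_abs]
      linarith [hκ_bdd (t * h)]
    have hpow : 1 ≤ h ^ r * |t| ^ r := by
      rw [← mul_rpow hh.le (abs_nonneg t), mul_comm]
      exact one_le_rpow ht.le hr
    linarith
  · have hflat : κ (t * h) = 1 := hκ_flat _ (by rw [abs_mul, abs_of_pos hh]; linarith)
    rw [Set.indicator_of_notMem (s := {s : ℝ | 1 < |s| * h}) ht, hflat]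
    simp

theorem norm_integral_flatTop_sub_one_mul_le (hκ_flat : ∀ t : ℝ, |t| ≤ 1 → κ t = 1)
    (hκ_bdd : ∀ t : ℝ, |κ t| ≤ 1) (hr : 0 ≤ r) (hh : 0 < h) {φ : ℝ → ℂ}
    (hφr : Integrable (fun t : ℝ => |t| ^ r * ‖φ t‖)) (x : ℝ) :
    ‖∫ t : ℝ, ((κ (t * h) : ℂ) - 1) * φ t * Complex.exp (-Complex.I * t * x)‖ ≤
      2 * h ^ r * ∫ t in {s : ℝ | 1 < |s| * h}, |t| ^ r * ‖φ t‖ := by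
  have hmeas : MeasurableSet {s : ℝ | 1 < |s| * h} :=
    measurableSet_lt measurable_const (measurable_abs.mul_const h)
  rw [← integral_const_mul, ← integral_indicator hmeas]
  refine norm_integral_le_of_norm_le ((hφr.const_mul (2 * h ^ r)).indicator hmeas)
    (ae_of_all _ fun t => ?_)
  have hexp : ‖Complex.exp (-Complex.I * t * x)‖ = 1 := by
    rw [show -Complex.I * t * x = ((-(t * x) : ℝ) : ℂ) * Complex.I by push_cast; ring,
      Complex.norm_exp_ofReal_mul_I]
  simp_rw [norm_mul, hexp, mul_one, ← mul_assoc]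
  rw [Set.indicator_mul_left (f := fun s => 2 * h ^ r * |s| ^ r)]
  gcongr
  exact norm_ofReal_flatTop_sub_one_le hκ_flat hκ_bdd hr hh t

end FlatTop

theorem tendsto_iSup_norm_div_rpow_nhdsGT {F : ℝ → ℝ → ℂ} {B : ℝ → ℝ} {r : ℝ}
    (hB : Tendsto B (𝓝[>] 0) (𝓝 0)) (hF : ∀ h > 0, ∀ x, ‖F h x‖ ≤ h ^ r * B h) :
    Tendsto (fun h : ℝ => (⨆ x : ℝ, ‖F h x‖) / h ^ r) (𝓝[>] 0) (𝓝 0) := by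
  refine tendsto_of_tendsto_of_tendsto_of_le_of_le' tendsto_const_nhds hB ?_ ?_ <;>
    filter_upwards [self_mem_nhdsWithin] with h (hh : 0 < h)
  · exact div_nonneg (Real.iSup_nonneg fun x => norm_nonneg _) (rpow_nonneg hh.le r)
  · rw [div_le_iff₀ (rpow_pos_of_pos hh r), mul_comm]
    exact ciSup_le (hF h hh)

theorem tendsto_const_mul_natCast_rpow_neg_nhdsGT {a c : ℝ} (ha : 0 < a) (hc : 0 < c) :
    Tendsto (fun n : ℕ => a * (n : ℝ) ^ (-c)) atTop (𝓝[>] 0) := by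
  refine tendsto_nhdsWithin_iff.mpr ⟨?_, ?_⟩
  · simpa using ((tendsto_rpow_neg_atTop hc).comp tendsto_natCast_atTop_atTop).const_mul a
  · filter_upwards [eventually_gt_atTop 0] with n hn
    exact mul_pos ha (rpow_pos_of_pos (Nat.cast_pos.mpr hn) _)

theorem tendsto_comp_const_mul_natCast_rpow_neg {g : ℝ → ℝ} {r a c : ℝ}
    (hg : Tendsto (fun h => g h / h ^ r) (𝓝[>] 0) (𝓝 0)) (ha : 0 < a) (hc : 0 < c) :
    Tendsto (fun n : ℕ => g (a * (n : ℝ) ^ (-c)) / (n : ℝ) ^ (-(r * c))) atTop (𝓝 0) := by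
  have hlim := (hg.comp (tendsto_const_mul_natCast_rpow_neg_nhdsGT ha hc)).const_mul (a ^ r)
  rw [mul_zero] at hlim
  refine hlim.congr' ?_
  filter_upwards [eventually_gt_atTop 0] with n hn
  have hn' : (0 : ℝ) < n := Nat.cast_pos.mpr hn
  have hpow : (a * (n : ℝ) ^ (-c)) ^ r = a ^ r * (n : ℝ) ^ (-(r * c)) := by
    rw [mul_rpow ha.le (rpow_nonneg hn'.le _), ← rpow_mul hn'.le, neg_mul, mul_comm c]
  have har : 0 < a ^ r := rpow_pos_of_pos ha r
  simp only [Function.comp_apply, hpow]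
  field_simp

theorem flat_top_bias_little_o_general
    (κ : ℝ → ℝ)
    (hκ_flat : ∀ t : ℝ, |t| ≤ 1 → κ t = 1)
    (hκ_bdd : ∀ t : ℝ, |κ t| ≤ 1)
    (φ : ℝ → ℂ)
    (r : ℝ) (hr : 0 < r)
    (hφr : Integrable (fun t : ℝ => |t| ^ r * ‖φ t‖))
    (bias : ℝ → ℝ → ℂ)
    (hbias : ∀ h x : ℝ, bias h x = (1 / (2 * Real.pi)) *
      ∫ t : ℝ, ((κ (t * h) : ℂ) - 1) * φ t * Complex.exp (-Complex.I * t * x))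
    (a : ℝ) (ha : 0 < a) :
    Tendsto (fun h : ℝ => (⨆ x : ℝ, ‖bias h x‖) / h ^ r)
      (nhdsWithin 0 (Set.Ioi 0)) (nhds 0) ∧
    Tendsto (fun n : ℕ =>
        (⨆ x : ℝ, ‖bias (a * (n : ℝ) ^ (-(1 / (2 * r + 1)))) x‖) /
          (n : ℝ) ^ (-(r / (2 * r + 1))))
      atTop (nhds 0) := by
  set B : ℝ → ℝ := fun h => (∫ t in {s : ℝ | 1 < |s| * h}, |t| ^ r * ‖φ t‖) / π
  have hB : Tendsto B (𝓝[>] 0) (𝓝 0) := by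
    simpa [B] using (tendsto_setIntegral_one_lt_abs_mul_nhdsGT hφr).div_const π
  have hbias_le : ∀ h > 0, ∀ x, ‖bias h x‖ ≤ h ^ r * B h := fun h hh x => by
    rw [hbias, norm_mul, norm_div, norm_one, norm_mul, Complex.norm_ofNat, Complex.norm_real,
      Real.norm_eq_abs, abs_of_pos pi_pos]
    calc 1 / (2 * π) * ‖_‖
        ≤ 1 / (2 * π) * (2 * h ^ r * ∫ t in {s : ℝ | 1 < |s| * h}, |t| ^ r * ‖φ t‖) := by
          gcongr
          exact norm_integral_flatTop_sub_one_mul_le hκ_flat hκ_bdd hr.le hh hφr x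
      _ = h ^ r * B h := by simp only [B]; ring
  have hsmall := tendsto_iSup_norm_div_rpow_nhdsGT hB hbias_le
  refine ⟨hsmall, ?_⟩
  simpa only [mul_one_div] using
    tendsto_comp_const_mul_natCast_rpow_neg hsmall ha (c := 1 / (2 * r + 1)) (by positivity)

theorem flat_top_bias_little_o
    (κ : ℝ → ℝ) (hκ_even : ∀ t, κ (-t) = κ t)
    (hκ_int : Integrable κ)
    (hκ_flat : ∀ t : ℝ, |t| ≤ 1 → κ t = 1)
    (hκ_bdd : ∀ t : ℝ, |κ t| ≤ 1)
    (f : ℝ → ℝ) (hf_nonneg : ∀ x, 0 ≤ f x) (hf_int : Integrable f)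
    (hf_dens : ∫ x : ℝ, f x = 1)
    (φ : ℝ → ℂ)
    (hφ : ∀ t : ℝ, φ t = ∫ x : ℝ, Complex.exp (Complex.I * t * x) * (f x : ℂ))
    (r : ℝ) (hr : 0 < r)
    (hφr : Integrable (fun t : ℝ => |t| ^ r * ‖φ t‖))
    (bias : ℝ → ℝ → ℂ)
    (hbias : ∀ h x : ℝ, bias h x = (1 / (2 * Real.pi)) *
      ∫ t : ℝ, ((κ (t * h) : ℂ) - 1) * φ t * Complex.exp (-Complex.I * t * x))
    (a : ℝ) (ha : 0 < a) :
    Tendsto (fun h : ℝ => (⨆ x : ℝ, ‖bias h x‖) / h ^ r)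
      (nhdsWithin 0 (Set.Ioi 0)) (nhds 0) ∧
    Tendsto (fun n : ℕ =>
        (⨆ x : ℝ, ‖bias (a * (n : ℝ) ^ (-(1 / (2 * r + 1)))) x‖) /
          (n : ℝ) ^ (-(r / (2 * r + 1))))
      atTop (nhds 0) :=
  flat_top_bias_little_o_general κ hκ_flat hκ_bdd φ r hr hφr bias hbias a ha
end

section
/- Under the hypotheses of the flat-top bias representation, if |φ(t)| ≤ D e^{-d|t|} with d > 0, and h_n = 1/(a log n) with a > 1/(2d), then sup_x |bias at bandwidth h_n| = O(n^{-da}) = O(n^{-1/2}). -/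
/-!
Since `κ ≡ 1` on `[-1, 1]`, the bias only sees frequencies `|t| > 1/h`, where `|κ(th) - 1| ≤ 2`
and `|φ(t)| ≤ D e^{-d|t|}`. Integrating this bound over the tail gives
`sup_x |bias_h(x)| ≤ (2D / (π d)) e^{-d/h}`, and at `h = 1 / (a log n)` the factor `e^{-d/h}` is
exactly `n^{-da}`, which is at most `n^{-1/2}` because `da > 1/2`.
-/

open MeasureTheory Real Set

theorem setIntegral_lt_abs_comp_abs (f : ℝ → ℝ) {T : ℝ} (hT : 0 ≤ T) :
    ∫ t in {t : ℝ | T < |t|}, f |t| = 2 * ∫ t in Ioi T, f t := by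
  have hindicator : {t : ℝ | T < |t|}.indicator (fun t => f |t|) =
      fun t => (Ioi T).indicator f |t| := by
    ext t
    by_cases ht : T < |t| <;> simp [indicator, ht]
  rw [← integral_indicator (measurableSet_lt measurable_const continuous_abs.measurable),
    hindicator, integral_comp_abs, setIntegral_indicator measurableSet_Ioi, Ioi_inter_Ioi,
    sup_eq_right.mpr hT]

theorem integral_exp_neg_mul_abs_tail {d : ℝ} (hd : 0 < d) {T : ℝ} (hT : 0 ≤ T) :
    ∫ t in {t : ℝ | T < |t|}, exp (-d * |t|) = 2 / d * exp (-d * T) := by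
  rw [setIntegral_lt_abs_comp_abs (fun t => exp (-d * t)) hT,
    integral_exp_mul_Ioi (neg_lt_zero.mpr hd)]
  field_simp

theorem integrableOn_exp_neg_mul_abs_tail {d : ℝ} (hd : 0 < d) {T : ℝ} (hT : 0 ≤ T) :
    IntegrableOn (fun t => exp (-d * |t|)) {t : ℝ | T < |t|} :=
  -- the Bochner integral of a non-integrable function is `0`
  Integrable.of_integral_ne_zero (by rw [integral_exp_neg_mul_abs_tail hd hT]; positivity)

theorem norm_setIntegral_tail_le_of_exp_decay {E : Type*} [NormedAddCommGroup E]
    [NormedSpace ℝ E] {g : ℝ → E} {B d T : ℝ} (hd : 0 < d) (hT : 0 ≤ T)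
    (hg : ∀ t, ‖g t‖ ≤ B * exp (-d * |t|)) :
    ‖∫ t in {t : ℝ | T < |t|}, g t‖ ≤ 2 * B / d * exp (-d * T) :=
  calc ‖∫ t in {t : ℝ | T < |t|}, g t‖
      ≤ ∫ t in {t : ℝ | T < |t|}, B * exp (-d * |t|) :=
        norm_integral_le_of_norm_le ((integrableOn_exp_neg_mul_abs_tail hd hT).const_mul B)
          (ae_of_all _ hg)
    _ = 2 * B / d * exp (-d * T) := by
        rw [integral_const_mul, integral_exp_neg_mul_abs_tail hd hT]
        ring

noncomputable def flatTopBias (κ : ℝ → ℝ) (φ : ℝ → ℂ) (h x : ℝ) : ℂ :=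
  (1 / (2 * π)) * ∫ t in {t : ℝ | 1 / h < |t|},
    ((κ (t * h) : ℂ) - 1) * φ t * Complex.exp (-Complex.I * t * x)

section FlatTopBias

variable {κ : ℝ → ℝ} {φ : ℝ → ℂ} {D d : ℝ}

theorem norm_flatTopBias_integrand_le (hκ : ∀ t, |κ t| ≤ 1)
    (hφ : ∀ t, ‖φ t‖ ≤ D * exp (-d * |t|)) (h x t : ℝ) :
    ‖((κ (t * h) : ℂ) - 1) * φ t * Complex.exp (-Complex.I * t * x)‖ ≤
      2 * D * exp (-d * |t|) := by
  have hwave : ‖Complex.exp (-Complex.I * t * x)‖ = 1 := by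
    rw [Complex.norm_exp]
    simp
  have hκ_sub : ‖(κ (t * h) : ℂ) - 1‖ ≤ 2 := by
    calc ‖(κ (t * h) : ℂ) - 1‖ ≤ |κ (t * h)| + 1 := by
          simpa using norm_sub_le (κ (t * h) : ℂ) 1
      _ ≤ 2 := by linarith [hκ (t * h)]
  rw [norm_mul, norm_mul, hwave, mul_one, mul_assoc]
  exact mul_le_mul hκ_sub (hφ t) (norm_nonneg _) zero_le_two

theorem norm_flatTopBias_le (hκ : ∀ t, |κ t| ≤ 1) (hφ : ∀ t, ‖φ t‖ ≤ D * exp (-d * |t|))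
    (hd : 0 < d) {h : ℝ} (hh : 0 < h) (x : ℝ) :
    ‖flatTopBias κ φ h x‖ ≤ 2 * D / (π * d) * exp (-d / h) := by
  have htail := norm_setIntegral_tail_le_of_exp_decay hd (one_div_pos.mpr hh).le
    (norm_flatTopBias_integrand_le hκ hφ h x)
  rw [flatTopBias, norm_mul, norm_div, norm_one, norm_mul, Complex.norm_two,
    Complex.norm_real, norm_eq_abs, abs_of_pos pi_pos]
  calc 1 / (2 * π) * ‖∫ t in {t : ℝ | 1 / h < |t|},
        ((κ (t * h) : ℂ) - 1) * φ t * Complex.exp (-Complex.I * t * x)‖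
      ≤ 1 / (2 * π) * (2 * (2 * D) / d * exp (-d * (1 / h))) := by gcongr
    _ = 2 * D / (π * d) * exp (-d / h) := by
        rw [mul_one_div]
        field_simp

end FlatTopBias

theorem flat_top_bias_exponential_rate_general
    (κ : ℝ → ℝ)
    (hκ_bdd : ∀ t : ℝ, |κ t| ≤ 1)
    (φ : ℝ → ℂ)
    (D d : ℝ) (hD : 0 < D) (hd : 0 < d)
    (hφ_decay : ∀ t : ℝ, ‖φ t‖ ≤ D * Real.exp (-d * |t|))
    (bias : ℝ → ℝ → ℂ)
    (hbias : ∀ h x : ℝ, bias h x = (1 / (2 * Real.pi)) *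
      ∫ t in {t : ℝ | 1 / h < |t|},
        ((κ (t * h) : ℂ) - 1) * φ t * Complex.exp (-Complex.I * t * x))
    (a : ℝ) (ha : 1 / (2 * d) < a) :
    ∃ C : ℝ, 0 < C ∧ ∀ n : ℕ, 2 ≤ n →
      (⨆ x : ℝ, ‖bias (1 / (a * Real.log n)) x‖) ≤ C * (n : ℝ) ^ (-(d * a)) ∧
      (⨆ x : ℝ, ‖bias (1 / (a * Real.log n)) x‖) ≤ C * (n : ℝ) ^ (-(1 / 2) : ℝ) := by
  have hda : 1 / 2 < d * a := by
    rw [div_lt_iff₀ (by positivity)] at ha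
    linarith
  have ha0 : 0 < a := lt_trans (by positivity) ha
  refine ⟨2 * D / (π * d), by positivity, fun n hn => ?_⟩
  have hn1 : (1 : ℝ) < n := by exact_mod_cast hn
  have hlog : 0 < a * log n := mul_pos ha0 (log_pos hn1)
  have hrate : (⨆ x : ℝ, ‖bias (1 / (a * log n)) x‖) ≤
      2 * D / (π * d) * (n : ℝ) ^ (-(d * a)) := by
    refine ciSup_le fun x => ?_
    rw [hbias]
    calc _ ≤ 2 * D / (π * d) * exp (-d / (1 / (a * log n))) :=
          norm_flatTopBias_le hκ_bdd hφ_decay hd (one_div_pos.mpr hlog) x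
      _ = 2 * D / (π * d) * (n : ℝ) ^ (-(d * a)) := by
          rw [rpow_def_of_pos (by positivity), div_div_eq_mul_div, div_one]
          ring_nf
  refine ⟨hrate, hrate.trans ?_⟩
  gcongr
  linarith

theorem flat_top_bias_exponential_rate
    (κ : ℝ → ℝ) (hκ_even : ∀ t, κ (-t) = κ t)
    (hκ_int : Integrable κ)
    (hκ_flat : ∀ t : ℝ, |t| ≤ 1 → κ t = 1)
    (hκ_bdd : ∀ t : ℝ, |κ t| ≤ 1)
    (f : ℝ → ℝ) (hf_nonneg : ∀ x, 0 ≤ f x) (hf_int : Integrable f)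
    (hf_dens : ∫ x : ℝ, f x = 1)
    (φ : ℝ → ℂ)
    (hφ : ∀ t : ℝ, φ t = ∫ x : ℝ, Complex.exp (Complex.I * t * x) * (f x : ℂ))
    (D d : ℝ) (hD : 0 < D) (hd : 0 < d)
    (hφ_decay : ∀ t : ℝ, ‖φ t‖ ≤ D * Real.exp (-d * |t|))
    (bias : ℝ → ℝ → ℂ)
    (hbias : ∀ h x : ℝ, bias h x = (1 / (2 * Real.pi)) *
      ∫ t in {t : ℝ | 1 / h < |t|},
        ((κ (t * h) : ℂ) - 1) * φ t * Complex.exp (-Complex.I * t * x))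
    (a : ℝ) (ha : 1 / (2 * d) < a) :
    ∃ C : ℝ, 0 < C ∧ ∀ n : ℕ, 2 ≤ n →
      (⨆ x : ℝ, ‖bias (1 / (a * Real.log n)) x‖) ≤ C * (n : ℝ) ^ (-(d * a)) ∧
      (⨆ x : ℝ, ‖bias (1 / (a * Real.log n)) x‖) ≤ C * (n : ℝ) ^ (-(1 / 2) : ℝ) :=
  flat_top_bias_exponential_rate_general κ hκ_bdd φ D d hD hd hφ_decay bias hbias a ha
end

section
/- Under the hypotheses of the flat-top bias representation, if φ(t) = 0 for |t| ≥ b and 0 < h ≤ 1/b, then the bias is identically zero: for all x, (1/(2π)) ∫ (κ(th) − 1) φ(t) e^{-itx} dt = 0. -/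
open MeasureTheory Real

lemma abs_mul_le_one_of_abs_lt {t h b : ℝ} (hh : 0 ≤ h) (ht : |t| < b) (hbh : b * h ≤ 1) :
    |t * h| ≤ 1 := by
  rw [abs_mul, abs_of_nonneg hh]
  nlinarith

lemma flatTop_sub_one_mul_eq_zero (κ : ℝ → ℝ) (hκ_flat : ∀ t : ℝ, |t| ≤ 1 → κ t = 1)
    (φ : ℝ → ℂ) {b h : ℝ} (hφ_supp : ∀ t : ℝ, b ≤ |t| → φ t = 0) (hh : 0 ≤ h)
    (hbh : b * h ≤ 1) (t : ℝ) : ((κ (t * h) : ℂ) - 1) * φ t = 0 := by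
  rcases le_or_gt b |t| with ht | ht
  · rw [hφ_supp t ht, mul_zero]
  · rw [hκ_flat _ (abs_mul_le_one_of_abs_lt hh ht hbh)]
    simp

theorem flat_top_bias_zero_of_bandlimited_general
    (κ : ℝ → ℝ)
    (hκ_flat : ∀ t : ℝ, |t| ≤ 1 → κ t = 1)
    (φ : ℝ → ℂ)
    (b : ℝ) (hb : 0 < b)
    (hφ_supp : ∀ t : ℝ, b ≤ |t| → φ t = 0)
    (h : ℝ) (hh : 0 < h) (hhb : h ≤ 1 / b) :
    ∀ x : ℝ, (1 / (2 * Real.pi)) *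
      (∫ t : ℝ, ((κ (t * h) : ℂ) - 1) * φ t * Complex.exp (-Complex.I * t * x)) = 0 := by
  intro x
  have hbh : b * h ≤ 1 := by
    rw [le_div_iff₀ hb] at hhb
    linarith
  simp only [flatTop_sub_one_mul_eq_zero κ hκ_flat φ hφ_supp hh.le hbh, zero_mul,
    integral_zero, mul_zero]

theorem flat_top_bias_zero_of_bandlimited
    (κ : ℝ → ℝ) (hκ_even : ∀ t, κ (-t) = κ t)
    (hκ_int : Integrable κ)
    (hκ_flat : ∀ t : ℝ, |t| ≤ 1 → κ t = 1)
    (hκ_bdd : ∀ t : ℝ, |κ t| ≤ 1)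
    (f : ℝ → ℝ) (hf_nonneg : ∀ x, 0 ≤ f x) (hf_int : Integrable f)
    (hf_dens : ∫ x : ℝ, f x = 1)
    (φ : ℝ → ℂ)
    (hφ : ∀ t : ℝ, φ t = ∫ x : ℝ, Complex.exp (Complex.I * t * x) * (f x : ℂ))
    (b : ℝ) (hb : 0 < b)
    (hφ_supp : ∀ t : ℝ, b ≤ |t| → φ t = 0)
    (h : ℝ) (hh : 0 < h) (hhb : h ≤ 1 / b) :
    ∀ x : ℝ, (1 / (2 * Real.pi)) *
      (∫ t : ℝ, ((κ (t * h) : ℂ) - 1) * φ t * Complex.exp (-Complex.I * t * x)) = 0 :=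
  flat_top_bias_zero_of_bandlimited_general κ hκ_flat φ b hb hφ_supp h hh hhb
end

section
/- Suppose f is a density whose characteristic function φ satisfies ∫ |t|^{r+p} |φ(t)| dt < ∞ for some r > 0 and natural number p. With a flat-top kernel (κ ≡ 1 on [−1,1], |κ| ≤ 1, κ and |t|^pκ(t) integrable), the bias of the p-th derivative estimator, given by (1/(2π)) ∫ (−it)^p (κ(th) − 1) φ(t) e^{-itx} dt, satisfies sup_x |bias| ≤ (1/π) ∫_{|t|>1/h} |t|^p |φ(t)| dt = o(h^r) as h → 0⁺. -/
/-!
The factor `κ(th) - 1` vanishes for `|t| ≤ 1/h` and has modulus at most `2` beyond, so the bias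
is bounded by the tail integral `∫_{|t|>1/h} |t|^p |φ|`. On that tail `|t|^p ≤ h^r |t|^(r+p)`, and
the tail integrals of the integrable function `|t|^(r+p) |φ|` tend to `0`.
-/

open MeasureTheory Real Filter

lemma measurableSet_lt_abs (M : ℝ) : MeasurableSet {t : ℝ | M < |t|} :=
  measurableSet_lt measurable_const measurable_abs

lemma tendsto_setIntegral_lt_abs_atTop {E : Type*} [NormedAddCommGroup E] [NormedSpace ℝ E]
    {μ : Measure ℝ} {g : ℝ → E} (hg : Integrable g μ) :
    Tendsto (fun M : ℝ => ∫ t in {t : ℝ | M < |t|}, g t ∂μ) atTop (nhds 0) := by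
  have hanti : Antitone fun M : ℝ => {t : ℝ | M < |t|} :=
    fun _ _ hMN _ ht => lt_of_le_of_lt hMN ht
  have hempty : (⋂ M : ℝ, {t : ℝ | M < |t|}) = ∅ :=
    Set.eq_empty_of_forall_notMem fun t ht => lt_irrefl |t| (Set.mem_iInter.mp ht |t|)
  simpa [hempty] using
    tendsto_setIntegral_of_antitone measurableSet_lt_abs hanti ⟨0, hg.integrableOn⟩

lemma pow_mul_le_rpow_mul_rpow_add_mul {h r a t : ℝ} (hh : 0 < h) (hr : 0 ≤ r) (ha : 0 ≤ a)
    (ht : 1 / h < |t|) (p : ℕ) :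
    |t| ^ p * a ≤ h ^ r * (|t| ^ (r + p) * a) := by
  have ht0 : 0 < |t| := lt_trans (by positivity) ht
  have hone : 1 ≤ (h * |t|) ^ r :=
    one_le_rpow ((div_lt_iff₀' hh).mp ht).le hr
  calc |t| ^ p * a = 1 * |t| ^ (p : ℝ) * a := by rw [one_mul, rpow_natCast]
    _ ≤ (h * |t|) ^ r * |t| ^ (p : ℝ) * a := by gcongr
    _ = h ^ r * (|t| ^ (r + p) * a) := by
      rw [rpow_add ht0, mul_rpow hh.le ht0.le]; ring

section TailBounds

variable {p : ℕ} {r h : ℝ} {u : ℝ → ℝ}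

lemma aestronglyMeasurable_pow_mul_of_integrable_rpow_add_mul
    (hu : Integrable (fun t : ℝ => |t| ^ (r + p) * u t)) :
    AEStronglyMeasurable (fun t : ℝ => |t| ^ p * u t) := by
  have hne : ∀ᵐ t : ℝ, t ≠ 0 := by simp [ae_iff, measure_singleton]
  refine ((measurable_abs.pow_const (-r)).aestronglyMeasurable.mul
    hu.aestronglyMeasurable).congr ?_
  filter_upwards [hne] with t ht
  change |t| ^ (-r) * (|t| ^ (r + p) * u t) = _
  rw [← mul_assoc, ← rpow_add (abs_pos.mpr ht), neg_add_cancel_left, rpow_natCast]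

lemma integrableOn_pow_mul_of_integrable_rpow_add_mul (hh : 0 < h) (hr : 0 ≤ r)
    (hu0 : ∀ t, 0 ≤ u t) (hu : Integrable (fun t : ℝ => |t| ^ (r + p) * u t)) :
    IntegrableOn (fun t : ℝ => |t| ^ p * u t) {t : ℝ | 1 / h < |t|} := by
  refine (hu.const_mul (h ^ r)).integrableOn.mono'
    (aestronglyMeasurable_pow_mul_of_integrable_rpow_add_mul hu).restrict ?_
  refine (ae_restrict_iff' (measurableSet_lt_abs _)).mpr (ae_of_all _ fun t ht => ?_)
  rw [norm_of_nonneg (by positivity [hu0 t])]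
  exact pow_mul_le_rpow_mul_rpow_add_mul hh hr (hu0 t) ht p

lemma setIntegral_pow_mul_le_rpow_mul (hh : 0 < h) (hr : 0 ≤ r)
    (hu0 : ∀ t, 0 ≤ u t) (hu : Integrable (fun t : ℝ => |t| ^ (r + p) * u t)) :
    ∫ t in {t : ℝ | 1 / h < |t|}, |t| ^ p * u t ≤
      h ^ r * ∫ t in {t : ℝ | 1 / h < |t|}, |t| ^ (r + p) * u t := by
  rw [← integral_const_mul]
  exact setIntegral_mono_on (integrableOn_pow_mul_of_integrable_rpow_add_mul hh hr hu0 hu)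
    (hu.const_mul _).integrableOn (measurableSet_lt_abs _)
    fun t ht => pow_mul_le_rpow_mul_rpow_add_mul hh hr (hu0 t) ht p

end TailBounds

section FlatTop

variable {κ : ℝ → ℝ} {h : ℝ}

lemma norm_ofReal_sub_one_le_indicator (hκ_flat : ∀ t : ℝ, |t| ≤ 1 → κ t = 1)
    (hκ_bdd : ∀ t : ℝ, |κ t| ≤ 1) (hh : 0 < h) (t : ℝ) :
    ‖(κ (t * h) : ℂ) - 1‖ ≤ {t : ℝ | 1 / h < |t|}.indicator (fun _ => 2) t := by
  by_cases ht : t ∈ {t : ℝ | 1 / h < |t|}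
  · rw [Set.indicator_of_mem ht]
    calc ‖(κ (t * h) : ℂ) - 1‖ ≤ ‖(κ (t * h) : ℂ)‖ + ‖(1 : ℂ)‖ := norm_sub_le _ _
      _ ≤ 1 + 1 := by
        gcongr
        · simpa using hκ_bdd _
        · simp
      _ = 2 := one_add_one_eq_two
  · have hth : |t * h| ≤ 1 := by
      rw [abs_mul, abs_of_pos hh, ← le_div_iff₀ hh]; exact not_lt.mp ht
    rw [Set.indicator_of_notMem ht, hκ_flat _ hth]
    simp

lemma norm_flatTop_bias_le {p : ℕ} {φ : ℝ → ℂ} (hκ_flat : ∀ t : ℝ, |t| ≤ 1 → κ t = 1)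
    (hκ_bdd : ∀ t : ℝ, |κ t| ≤ 1) (hh : 0 < h)
    (hφ : IntegrableOn (fun t : ℝ => |t| ^ p * ‖φ t‖) {t : ℝ | 1 / h < |t|}) (x : ℝ) :
    ‖(1 / (2 * Real.pi)) * ∫ t : ℝ, (-Complex.I * t) ^ p * ((κ (t * h) : ℂ) - 1) * φ t *
        Complex.exp (-Complex.I * t * x)‖ ≤
      (1 / Real.pi) * ∫ t in {t : ℝ | 1 / h < |t|}, |t| ^ p * ‖φ t‖ := by
  set S := {t : ℝ | 1 / h < |t|}
  have hbound : ∀ t : ℝ, ‖(-Complex.I * t) ^ p * ((κ (t * h) : ℂ) - 1) * φ t *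
      Complex.exp (-Complex.I * t * x)‖ ≤ S.indicator (fun t => 2 * (|t| ^ p * ‖φ t‖)) t := by
    intro t
    have hexp : ‖Complex.exp (-Complex.I * t * x)‖ = 1 := by
      rw [show -Complex.I * t * x = ((-(t * x) : ℝ) : ℂ) * Complex.I by push_cast; ring]
      exact Complex.norm_exp_ofReal_mul_I _
    have hκ := norm_ofReal_sub_one_le_indicator hκ_flat hκ_bdd hh t
    simp only [norm_mul, norm_pow, norm_neg, Complex.norm_I, one_mul, Complex.norm_real,
      Real.norm_eq_abs, hexp, mul_one]
    by_cases ht : t ∈ S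
    · rw [Set.indicator_of_mem ht] at hκ ⊢
      calc |t| ^ p * ‖(κ (t * h) : ℂ) - 1‖ * ‖φ t‖ ≤ |t| ^ p * 2 * ‖φ t‖ := by gcongr
        _ = 2 * (|t| ^ p * ‖φ t‖) := by ring
    · rw [Set.indicator_of_notMem ht] at hκ ⊢
      simp [norm_le_zero_iff.mp hκ]
  calc _ = (1 / (2 * Real.pi)) * ‖∫ t : ℝ, (-Complex.I * t) ^ p * ((κ (t * h) : ℂ) - 1) *
          φ t * Complex.exp (-Complex.I * t * x)‖ := by
        rw [norm_mul]; congr 1; simp [abs_of_pos Real.pi_pos]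
    _ ≤ (1 / (2 * Real.pi)) * ∫ t, S.indicator (fun t => 2 * (|t| ^ p * ‖φ t‖)) t := by
        gcongr
        exact norm_integral_le_of_norm_le
          (IntegrableOn.integrable_indicator (hφ.const_mul 2) (measurableSet_lt_abs _)) (ae_of_all _ hbound)
    _ = (1 / Real.pi) * ∫ t in S, |t| ^ p * ‖φ t‖ := by
        rw [integral_indicator (measurableSet_lt_abs _), integral_const_mul]
        ring

end FlatTop

theorem derivative_estimator_bias_little_o_general
    (p : ℕ) (r : ℝ) (hr : 0 < r)
    (κ : ℝ → ℝ)
    (hκ_flat : ∀ t : ℝ, |t| ≤ 1 → κ t = 1)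
    (hκ_bdd : ∀ t : ℝ, |κ t| ≤ 1)
    (φ : ℝ → ℂ)
    (hφrp : Integrable (fun t : ℝ => |t| ^ (r + p) * ‖φ t‖))
    (bias : ℝ → ℝ → ℂ)
    (hbias : ∀ h x : ℝ, bias h x = (1 / (2 * Real.pi)) *
      ∫ t : ℝ, (-Complex.I * t) ^ p * ((κ (t * h) : ℂ) - 1) * φ t *
        Complex.exp (-Complex.I * t * x)) :
    (∀ h : ℝ, 0 < h →
      (⨆ x : ℝ, ‖bias h x‖) ≤
        (1 / Real.pi) * ∫ t in {t : ℝ | 1 / h < |t|}, |t| ^ p * ‖φ t‖) ∧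
    Tendsto (fun h : ℝ => (⨆ x : ℝ, ‖bias h x‖) / h ^ r)
      (nhdsWithin 0 (Set.Ioi 0)) (nhds 0) := by
  have hφ0 : ∀ t, 0 ≤ ‖φ t‖ := fun t => norm_nonneg _
  have hsup : ∀ h : ℝ, 0 < h → (⨆ x : ℝ, ‖bias h x‖) ≤
      (1 / Real.pi) * ∫ t in {t : ℝ | 1 / h < |t|}, |t| ^ p * ‖φ t‖ := fun h hh =>
    ciSup_le fun x => hbias h x ▸ norm_flatTop_bias_le hκ_flat hκ_bdd hh
      (integrableOn_pow_mul_of_integrable_rpow_add_mul hh hr.le hφ0 hφrp) x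
  refine ⟨hsup, ?_⟩
  have htail : Tendsto (fun h : ℝ => (1 / Real.pi) *
      ∫ t in {t : ℝ | 1 / h < |t|}, |t| ^ (r + p) * ‖φ t‖) (nhdsWithin 0 (Set.Ioi 0)) (nhds 0) := by
    simpa using ((tendsto_setIntegral_lt_abs_atTop hφrp).comp
      (by simpa only [one_div] using tendsto_inv_nhdsGT_zero)).const_mul (1 / Real.pi)
  refine squeeze_zero' ?_ ?_ htail
  all_goals filter_upwards [self_mem_nhdsWithin] with h (hh : 0 < h)
  · exact div_nonneg (Real.iSup_nonneg fun x => norm_nonneg _) (rpow_nonneg hh.le r)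
  · rw [div_le_iff₀ (rpow_pos_of_pos hh r), mul_comm _ (h ^ r), mul_left_comm]
    exact (hsup h hh).trans (mul_le_mul_of_nonneg_left
      (setIntegral_pow_mul_le_rpow_mul hh hr.le hφ0 hφrp) (by positivity))

theorem derivative_estimator_bias_little_o
    (p : ℕ) (r : ℝ) (hr : 0 < r)
    (κ : ℝ → ℝ) (hκ_even : ∀ t, κ (-t) = κ t)
    (hκ_int : Integrable κ)
    (hκp_int : Integrable (fun t : ℝ => |t| ^ p * κ t))
    (hκ_flat : ∀ t : ℝ, |t| ≤ 1 → κ t = 1)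
    (hκ_bdd : ∀ t : ℝ, |κ t| ≤ 1)
    (f : ℝ → ℝ) (hf_nonneg : ∀ x, 0 ≤ f x) (hf_int : Integrable f)
    (hf_dens : ∫ x : ℝ, f x = 1)
    (φ : ℝ → ℂ)
    (hφ : ∀ t : ℝ, φ t = ∫ x : ℝ, Complex.exp (Complex.I * t * x) * (f x : ℂ))
    (hφrp : Integrable (fun t : ℝ => |t| ^ (r + p) * ‖φ t‖))
    (bias : ℝ → ℝ → ℂ)
    (hbias : ∀ h x : ℝ, bias h x = (1 / (2 * Real.pi)) *
      ∫ t : ℝ, (-Complex.I * t) ^ p * ((κ (t * h) : ℂ) - 1) * φ t *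
        Complex.exp (-Complex.I * t * x)) :
    (∀ h : ℝ, 0 < h →
      (⨆ x : ℝ, ‖bias h x‖) ≤
        (1 / Real.pi) * ∫ t in {t : ℝ | 1 / h < |t|}, |t| ^ p * ‖φ t‖) ∧
    Tendsto (fun h : ℝ => (⨆ x : ℝ, ‖bias h x‖) / h ^ r)
      (nhdsWithin 0 (Set.Ioi 0)) (nhds 0) :=
  derivative_estimator_bias_little_o_general p r hr κ hκ_flat hκ_bdd φ hφrp bias hbias
end
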